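/- Let {X_j} be a sequence of zero-mean ℝ^d-valued random vectors, uniformly bounded in the sup norm with L = sup_j ‖X_j‖_∞, with φ(n₀) < 1/2 for some n₀ ∈ ℕ and Σ_{m≥1}(α(m))^{1−2/p} < ∞ for some p > 2. Fix a unit vector u₀ and put S(M) = Σ_{j∈M} X_j · u₀ for finite M ⊂ ℕ. Let M₁ < M₂ < … < M_k be finite integer intervals that are r-separated, let I_j = M_j ∪ D_j where D_j = {max M_j + 1, …, max M_j + r} are the gap blocks of length r, and set Y = S(I₁ ∪ … ∪ I_k) − S(M₁ ∪ … ∪ M_k) = Σ_{j=1}^k S(D_j). Then there is a constant Q₀ > 0, depending only on p, r, L, n₀ and the α-mixing coefficients (and not on k or the choice of blocks), such that Var(Y) ≤ Q₀ · k. -/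

import Mathlib

/-!
The gap sums `ξ_j = S(D_j)` are bounded by `r L`, and for `i < j` the variable `ξ_i` depends on
the past up to `max M_i + r` while `ξ_j` depends on the future from `max M_j + 1`; by
`r`-separation these are at least `j - i` apart. Writing `Var (∑ ξ_j) = ∑_{i,j} Cov(ξ_i, ξ_j)`,
Ibragimov's covariance inequality `|Cov(ξ, η)| ≤ 4 ‖ξ‖_∞ ‖η‖_∞ α` bounds the off-diagonal terms
by `4 r² L² α(|i - j|)`. Since `α ≤ 1`, summability of `α^(1 - 2/p)` gives summability of `α`, so
every row of the covariance matrix is bounded independently of `k`.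
-/

open MeasureTheory ProbabilityTheory Filter Finset
open scoped NNReal ENNReal

noncomputable section

/-- The σ-algebra generated by `X_0, …, X_j`. -/
def pastSigma {Ω E : Type*} [MeasurableSpace E] (X : ℕ → Ω → E) (j : ℕ) :
    MeasurableSpace Ω :=
  ⨆ i ∈ Set.Iic j, MeasurableSpace.comap (X i) inferInstance

/-- The σ-algebra generated by `X_i, i ≥ j`. -/
def futureSigma {Ω E : Type*} [MeasurableSpace E] (X : ℕ → Ω → E) (j : ℕ) :
    MeasurableSpace Ω :=
  ⨆ i ∈ Set.Ici j, MeasurableSpace.comap (X i) inferInstance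

/-- The strong (α) mixing coefficients of the sequence `X`. -/
def alphaMix {Ω E : Type*} [MeasurableSpace Ω] [MeasurableSpace E]
    (P : Measure Ω) (X : ℕ → Ω → E) (k : ℕ) : ℝ :=
  sSup { r | ∃ j, ∃ A B : Set Ω, MeasurableSet[pastSigma X j] A ∧
    MeasurableSet[futureSigma X (j + k)] B ∧
    r = |(P (A ∩ B)).toReal - (P A).toReal * (P B).toReal| }

/-- The φ-mixing coefficients of the sequence `X`. -/
def phiMix {Ω E : Type*} [MeasurableSpace Ω] [MeasurableSpace E]
    (P : Measure Ω) (X : ℕ → Ω → E) (k : ℕ) : ℝ :=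
  sSup { r | ∃ j, ∃ A B : Set Ω, MeasurableSet[pastSigma X j] A ∧
    MeasurableSet[futureSigma X (j + k)] B ∧ 0 < P A ∧
    r = |(P (A ∩ B)).toReal / (P A).toReal - (P B).toReal| }


section Covariance

variable {Ω : Type*} {m₀ : MeasurableSpace Ω} {P : Measure Ω} [IsProbabilityMeasure P]

def signIndicator (A : Set Ω) (ω : Ω) : ℝ := 2 * A.indicator 1 ω - 1

lemma abs_signIndicator_le_one (A : Set Ω) (ω : Ω) : |signIndicator A ω| ≤ 1 := by
  by_cases h : ω ∈ A <;> norm_num [signIndicator, h]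

lemma measurable_signIndicator {m : MeasurableSpace Ω} {A : Set Ω} (hA : MeasurableSet[m] A) :
    Measurable[m] (signIndicator A) :=
  (measurable_const.mul (measurable_const.indicator hA)).sub measurable_const

lemma covariance_signIndicator {A B : Set Ω} (hA : MeasurableSet A) (hB : MeasurableSet B) :
    cov[signIndicator B, signIndicator A; P]
      = 4 * ((P (A ∩ B)).toReal - (P A).toReal * (P B).toReal) := by
  have hint : ∀ {C : Set Ω}, MeasurableSet C →
      Integrable (fun ω => 2 * C.indicator (1 : Ω → ℝ) ω) P :=
    fun hC => ((integrable_const (1 : ℝ)).indicator hC).const_mul 2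
  have hmem : ∀ {C : Set Ω}, MeasurableSet C → MemLp (C.indicator (1 : Ω → ℝ)) 2 P :=
    fun hC => memLp_indicator_const 2 hC 1 (Or.inr (measure_ne_top P _))
  unfold signIndicator
  rw [covariance_sub_const_left (hint hB), covariance_sub_const_right (hint hA),
    covariance_const_mul_left, covariance_const_mul_right, covariance_eq_sub (hmem hB) (hmem hA),
    ← Set.inter_indicator_one, Set.inter_comm, integral_indicator_one hA, integral_indicator_one hB,
    integral_indicator_one (hA.inter hB)]
  simp only [measureReal_def]
  ring

variable {ξ η : Ω → ℝ} {a : ℝ}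

lemma integrable_of_abs_le (hξ : AEStronglyMeasurable ξ P) (hξa : ∀ ω, |ξ ω| ≤ a) :
    Integrable ξ P :=
  (integrable_const a).mono' hξ (ae_of_all _ hξa)

lemma covariance_eq_integral_mul_sub (hξ : AEStronglyMeasurable ξ P) (hξa : ∀ ω, |ξ ω| ≤ a)
    (hη : Integrable η P) : cov[ξ, η; P] = ∫ ω, ξ ω * (η ω - P[η]) ∂P := by
  have hηc : Integrable (fun ω => η ω - P[η]) P := hη.sub (integrable_const _)
  have hcentred : ∫ ω, (η ω - P[η]) ∂P = 0 := by
    rw [integral_sub hη (integrable_const _), integral_const, probReal_univ, one_smul, sub_self]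
  simp_rw [covariance, sub_mul]
  rw [integral_sub (hηc.bdd_mul hξ (ae_of_all _ hξa)) (hηc.const_mul _), integral_const_mul,
    hcentred, mul_zero, sub_zero]

lemma integral_mul_condExp_of_abs_le {m : MeasurableSpace Ω} (hm : m ≤ m₀)
    (hξ : StronglyMeasurable[m] ξ) (hξa : ∀ ω, |ξ ω| ≤ a) (hη : Integrable η P) :
    ∫ ω, ξ ω * η ω ∂P = ∫ ω, ξ ω * P[η|m] ω ∂P :=
  calc ∫ ω, ξ ω * η ω ∂P = ∫ ω, P[ξ * η|m] ω ∂P := (integral_condExp hm).symm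
    _ = ∫ ω, ξ ω * P[η|m] ω ∂P :=
      integral_congr_ae (condExp_stronglyMeasurable_mul_of_bound hm hξ hη a (ae_of_all _ hξa))

/-- Ibragimov's reduction: the covariance with a bounded `m`-measurable variable is controlled
by the covariance with the `±1`-variable of the set where `P[η - P[η] | m]` is nonnegative. -/
lemma exists_abs_covariance_le_signIndicator {m : MeasurableSpace Ω} (hm : m ≤ m₀)
    (hξ : StronglyMeasurable[m] ξ) (hξa : ∀ ω, |ξ ω| ≤ a) (hη : Integrable η P) :
    ∃ A, MeasurableSet[m] A ∧ |cov[ξ, η; P]| ≤ a * cov[signIndicator A, η; P] := by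
  set ζ := P[fun ω => η ω - P[η]|m]
  have hη' : Integrable (fun ω => η ω - P[η]) P := hη.sub (integrable_const _)
  have hA : MeasurableSet[m] {ω | 0 ≤ ζ ω} :=
    measurableSet_le measurable_const stronglyMeasurable_condExp.measurable
  have hs : StronglyMeasurable[m] (signIndicator {ω | 0 ≤ ζ ω}) :=
    (measurable_signIndicator hA).stronglyMeasurable
  have hsζ : ∀ ω, signIndicator {ω | 0 ≤ ζ ω} ω * ζ ω = |ζ ω| := fun ω => by
    by_cases h : 0 ≤ ζ ω
    · norm_num [signIndicator, h, abs_of_nonneg h]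
    · simp [signIndicator, h, abs_of_neg (not_le.mp h)]
  refine ⟨_, hA, ?_⟩
  calc |cov[ξ, η; P]| = ‖∫ ω, ξ ω * ζ ω ∂P‖ := by
        rw [covariance_eq_integral_mul_sub (hξ.mono hm).aestronglyMeasurable hξa hη,
          integral_mul_condExp_of_abs_le hm hξ hξa hη', Real.norm_eq_abs]
    _ ≤ ∫ ω, a * |ζ ω| ∂P :=
        norm_integral_le_of_norm_le (integrable_condExp.abs.const_mul a) (ae_of_all _ fun ω => by
          rw [norm_mul, Real.norm_eq_abs, Real.norm_eq_abs]
          exact mul_le_mul_of_nonneg_right (hξa ω) (abs_nonneg _))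
    _ = a * cov[signIndicator {ω | 0 ≤ ζ ω}, η; P] := by
        rw [integral_const_mul, covariance_eq_integral_mul_sub
          ((hs.mono hm).aestronglyMeasurable) (abs_signIndicator_le_one _) hη,
          integral_mul_condExp_of_abs_le hm hs (abs_signIndicator_le_one _) hη']
        exact congrArg (a * ·) (integral_congr_ae (ae_of_all _ fun ω => (hsζ ω).symm))


lemma abs_covariance_le_of_abs_le_of_mixing {m₁ m₂ : MeasurableSpace Ω} (hm₁ : m₁ ≤ m₀)
    (hm₂ : m₂ ≤ m₀) {b α : ℝ} (hξ : StronglyMeasurable[m₁] ξ) (hη : StronglyMeasurable[m₂] η)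
    (hξa : ∀ ω, |ξ ω| ≤ a) (hηb : ∀ ω, |η ω| ≤ b)
    (hα : ∀ A B, MeasurableSet[m₁] A → MeasurableSet[m₂] B →
      |(P (A ∩ B)).toReal - (P A).toReal * (P B).toReal| ≤ α) :
    |cov[ξ, η; P]| ≤ 4 * a * b * α := by
  obtain ⟨ω⟩ := P.nonempty_of_neZero
  have ha : 0 ≤ a := (abs_nonneg _).trans (hξa ω)
  have hb : 0 ≤ b := (abs_nonneg _).trans (hηb ω)
  obtain ⟨A, hA, hξA⟩ := exists_abs_covariance_le_signIndicator (P := P) hm₁ hξ hξa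
    (integrable_of_abs_le (hη.mono hm₂).aestronglyMeasurable hηb)
  obtain ⟨B, hB, hηB⟩ := exists_abs_covariance_le_signIndicator (P := P) hm₂ hη hηb
    (integrable_of_abs_le ((measurable_signIndicator (hm₁ _ hA)).aestronglyMeasurable)
      (abs_signIndicator_le_one A))
  calc |cov[ξ, η; P]| ≤ a * |cov[η, signIndicator A; P]| := by
        rw [covariance_comm η]
        exact hξA.trans (mul_le_mul_of_nonneg_left (le_abs_self _) ha)
    _ ≤ a * (b * cov[signIndicator B, signIndicator A; P]) := by gcongr
    _ = 4 * a * b * ((P (A ∩ B)).toReal - (P A).toReal * (P B).toReal) := by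
        rw [covariance_signIndicator (hm₁ _ hA) (hm₂ _ hB)]
        ring
    _ ≤ 4 * a * b * α := by
        gcongr
        exact (le_abs_self _).trans (hα A B hA hB)

end Covariance

section Sigma

variable {Ω E : Type*} [MeasurableSpace E] {X : ℕ → Ω → E}

lemma pastSigma_le [MeasurableSpace Ω] (hX : ∀ n, Measurable (X n)) (n : ℕ) :
    pastSigma X n ≤ ‹MeasurableSpace Ω› :=
  iSup₂_le fun i _ => (hX i).comap_le

lemma futureSigma_le [MeasurableSpace Ω] (hX : ∀ n, Measurable (X n)) (n : ℕ) :
    futureSigma X n ≤ ‹MeasurableSpace Ω› :=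
  iSup₂_le fun i _ => (hX i).comap_le

lemma measurable_pastSigma {i n : ℕ} (hi : i ≤ n) : Measurable[pastSigma X n] (X i) :=
  measurable_iff_comap_le.mpr
    (le_biSup (fun i => MeasurableSpace.comap (X i) inferInstance) (Set.mem_Iic.mpr hi))

lemma measurable_futureSigma {i n : ℕ} (hi : n ≤ i) : Measurable[futureSigma X n] (X i) :=
  measurable_iff_comap_le.mpr
    (le_biSup (fun i => MeasurableSpace.comap (X i) inferInstance) (Set.mem_Ici.mpr hi))

end Sigma

section Mixing

variable {Ω E : Type*} [MeasurableSpace Ω] [MeasurableSpace E]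
  (P : Measure Ω) [IsProbabilityMeasure P] (X : ℕ → Ω → E)

lemma abs_measure_inter_sub_mul_le_one (A B : Set Ω) :
    |(P (A ∩ B)).toReal - (P A).toReal * (P B).toReal| ≤ 1 := by
  have h : ∀ C, 0 ≤ (P C).toReal ∧ (P C).toReal ≤ 1 := fun C =>
    ⟨ENNReal.toReal_nonneg, measureReal_le_one⟩
  obtain ⟨hAB₀, hAB₁⟩ := h (A ∩ B)
  obtain ⟨hA₀, hA₁⟩ := h A
  obtain ⟨hB₀, hB₁⟩ := h B
  rw [abs_le]
  constructor <;> nlinarith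

lemma abs_sub_le_alphaMix (g j : ℕ) {A B : Set Ω} (hA : MeasurableSet[pastSigma X j] A)
    (hB : MeasurableSet[futureSigma X (j + g)] B) :
    |(P (A ∩ B)).toReal - (P A).toReal * (P B).toReal| ≤ alphaMix P X g :=
  le_csSup ⟨1, by rintro _ ⟨_, A, B, -, -, rfl⟩; exact abs_measure_inter_sub_mul_le_one P A B⟩
    ⟨j, A, B, hA, hB, rfl⟩

lemma alphaMix_nonneg (g : ℕ) : 0 ≤ alphaMix P X g := by
  simpa using abs_sub_le_alphaMix P X g 0 (@MeasurableSet.empty _ (pastSigma X 0))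
    (@MeasurableSet.empty _ (futureSigma X (0 + g)))

lemma alphaMix_le_one (g : ℕ) : alphaMix P X g ≤ 1 :=
  csSup_le ⟨_, 0, ∅, ∅, @MeasurableSet.empty _ (pastSigma X 0),
    @MeasurableSet.empty _ (futureSigma X (0 + g)), rfl⟩
    (by rintro _ ⟨_, A, B, -, -, rfl⟩; exact abs_measure_inter_sub_mul_le_one P A B)

lemma summable_alphaMix_of_summable_rpow {e : ℝ} (he : e ≤ 1)
    (h : Summable fun m : ℕ => alphaMix P X (m + 1) ^ e) :
    Summable fun m : ℕ => alphaMix P X (m + 1) :=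
  h.of_nonneg_of_le (fun _ => alphaMix_nonneg P X _) fun _ =>
    Real.self_le_rpow_of_le_one (alphaMix_nonneg P X _) (alphaMix_le_one P X _) he

lemma abs_covariance_le_alphaMix (hX : ∀ n, Measurable (X n)) {ξ η : Ω → ℝ} {a b : ℝ}
    {n g : ℕ} (hξ : Measurable[pastSigma X n] ξ) (hη : Measurable[futureSigma X (n + g)] η)
    (hξa : ∀ ω, |ξ ω| ≤ a) (hηb : ∀ ω, |η ω| ≤ b) :
    |cov[ξ, η; P]| ≤ 4 * a * b * alphaMix P X g :=
  abs_covariance_le_of_abs_le_of_mixing (pastSigma_le hX n) (futureSigma_le hX (n + g))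
    hξ.stronglyMeasurable hη.stronglyMeasurable hξa hηb
    fun _ _ hA hB => abs_sub_le_alphaMix P X g n hA hB

end Mixing

lemma sum_comp_le_tsum_of_injOn {ι : Type*} {s : Finset ι} {g : ι → ℕ} (hg : Set.InjOn g s)
    {β : ℕ → ℝ} (hβ₀ : ∀ m, 0 ≤ β m) (hβ : Summable β) : ∑ i ∈ s, β (g i) ≤ ∑' m, β m := by
  rw [← Finset.sum_image hg]
  exact hβ.sum_le_tsum _ fun m _ => hβ₀ m

section VarianceSum

variable {Ω : Type*} [MeasurableSpace Ω] {P : Measure Ω} [IsProbabilityMeasure P]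
  {k : ℕ} {ξ : Fin k → Ω → ℝ} {c : ℝ} {β : ℕ → ℝ}

lemma sum_covariance_le_of_abs_covariance_le (hξ : ∀ j, AEMeasurable (ξ j) P)
    (hξc : ∀ j ω, |ξ j ω| ≤ c) (hβ₀ : ∀ m, 0 ≤ β m) (hβ : Summable β)
    (hcov : ∀ i j : Fin k, i < j → |cov[ξ i, ξ j; P]| ≤ β (j - i - 1)) (i : Fin k) :
    ∑ j, cov[ξ i, ξ j; P] ≤ c ^ 2 + 2 * ∑' m, β m := by
  have hterm : ∀ j, cov[ξ i, ξ j; P] ≤ (if j < i then β (i - j - 1) else 0)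
      + (if i = j then c ^ 2 else 0) + (if i < j then β (j - i - 1) else 0) := by
    intro j
    rcases lt_trichotomy j i with hji | rfl | hij
    · simp only [hji, if_true, hji.ne', not_lt.mpr hji.le, if_false, add_zero]
      rw [covariance_comm]
      exact (le_abs_self _).trans (hcov j i hji)
    · simp only [lt_irrefl, if_false, if_true, zero_add, add_zero]
      rw [covariance_self (hξ j)]
      convert variance_le_sq_of_bounded (ae_of_all _ fun ω => abs_le.mp (hξc j ω)) (hξ j)
      ring
    · simp only [hij, if_true, hij.ne, not_lt.mpr hij.le, if_false, zero_add]
      exact (le_abs_self _).trans (hcov i j hij)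
  calc ∑ j, cov[ξ i, ξ j; P]
      ≤ ∑ j ∈ Finset.univ.filter (· < i), β (i - j - 1) + c ^ 2
        + ∑ j ∈ Finset.univ.filter (i < ·), β (j - i - 1) := by
        refine (Finset.sum_le_sum fun j _ => hterm j).trans_eq ?_
        rw [Finset.sum_add_distrib, Finset.sum_add_distrib, Finset.sum_ite_eq, Finset.sum_filter,
          Finset.sum_filter, if_pos (Finset.mem_univ _)]
    _ ≤ ∑' m, β m + c ^ 2 + ∑' m, β m := by
        gcongr <;>
        · refine sum_comp_le_tsum_of_injOn (fun j hj j' hj' h => Fin.ext ?_) hβ₀ hβ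
          simp only [Finset.coe_filter, Finset.mem_univ, true_and, Set.mem_ofPred_eq,
            Fin.lt_def] at hj hj'
          omega
    _ = c ^ 2 + 2 * ∑' m, β m := by ring

lemma variance_sum_le_of_abs_covariance_le (hξ : ∀ j, AEMeasurable (ξ j) P)
    (hξc : ∀ j ω, |ξ j ω| ≤ c) (hβ₀ : ∀ m, 0 ≤ β m) (hβ : Summable β)
    (hcov : ∀ i j : Fin k, i < j → |cov[ξ i, ξ j; P]| ≤ β (j - i - 1)) :
    variance (fun ω => ∑ j, ξ j ω) P ≤ (c ^ 2 + 2 * ∑' m, β m) * k := by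
  have hmem : ∀ j, MemLp (ξ j) 2 P := fun j =>
    MemLp.of_bound (hξ j).aestronglyMeasurable c (ae_of_all _ (hξc j))
  rw [← covariance_self (Finset.aemeasurable_fun_sum _ fun j _ => hξ j),
    covariance_fun_sum_fun_sum hmem hmem]
  calc ∑ i, ∑ j, cov[ξ i, ξ j; P] ≤ ∑ _i : Fin k, (c ^ 2 + 2 * ∑' m, β m) :=
        Finset.sum_le_sum fun i _ => sum_covariance_le_of_abs_covariance_le hξ hξc hβ₀ hβ hcov i
    _ = (c ^ 2 + 2 * ∑' m, β m) * k := by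
        rw [Finset.sum_const, Finset.card_univ, Fintype.card_fin, nsmul_eq_mul, mul_comm]

end VarianceSum

section Blocks

variable {Ω E : Type*} [MeasurableSpace E] {X : ℕ → Ω → E} {f : E → ℝ}

lemma measurable_pastSigma_sum (hf : Measurable f) {s : Finset ℕ} {n : ℕ}
    (hs : ∀ i ∈ s, i ≤ n) : Measurable[pastSigma X n] fun ω => ∑ i ∈ s, f (X i ω) :=
  Finset.measurable_fun_sum _ fun i hi => hf.comp (measurable_pastSigma (hs i hi))

lemma measurable_futureSigma_sum (hf : Measurable f) {s : Finset ℕ} {n : ℕ}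
    (hs : ∀ i ∈ s, n ≤ i) : Measurable[futureSigma X n] fun ω => ∑ i ∈ s, f (X i ω) :=
  Finset.measurable_fun_sum _ fun i hi => hf.comp (measurable_futureSigma (hs i hi))

end Blocks

section Separation

variable {k r : ℕ} {t : Fin k → ℕ}

lemma add_sub_mul_le_of_separated (ht : ∀ i j, i < j → t i + r ≤ t j) {i j : Fin k}
    (hij : i ≤ j) : t i + (j - i) * r ≤ t j := by
  obtain ⟨s, hs⟩ := Nat.exists_eq_add_of_le (Fin.le_def.mp hij)
  induction s generalizing j with
  | zero =>
    obtain rfl : j = i := Fin.ext (by omega)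
    simp
  | succ s ih =>
    let j' : Fin k := ⟨i + s, by omega⟩
    have h₁ : t i + s * r ≤ t j' := by
      simpa [j'] using ih (j := j') (Fin.le_def.mpr (by simp [j'])) rfl
    have h₂ : t j' + r ≤ t j := ht j' j (Fin.lt_def.mpr (by simp [j']; omega))
    rw [show (j : ℕ) - i = s + 1 by omega, Nat.succ_mul]
    omega

lemma add_add_sub_le_of_separated (ht : ∀ i j, i < j → t i + r ≤ t j) (hr : 1 ≤ r)
    {i j : Fin k} (hij : i < j) : t i + r + (j - i) ≤ t j + 1 := by
  have h := add_sub_mul_le_of_separated ht hij.le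
  have hji : 1 ≤ (j : ℕ) - i := by have := Fin.lt_def.mp hij; omega
  nlinarith [Nat.mul_le_mul (Nat.sub_le_sub_right hji 1) (Nat.sub_le_sub_right hr 1)]

end Separation

lemma abs_sum_Icc_le {g : ℕ → ℝ} {L : ℝ} (hg : ∀ n, |g n| ≤ L) (t r : ℕ) :
    |∑ i ∈ Finset.Icc (t + 1) (t + r), g i| ≤ r * L :=
  calc |∑ i ∈ Finset.Icc (t + 1) (t + r), g i|
      ≤ ∑ i ∈ Finset.Icc (t + 1) (t + r), |g i| := Finset.abs_sum_le_sum_abs _ _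
    _ ≤ (Finset.Icc (t + 1) (t + r)).card • L := Finset.sum_le_card_nsmul _ _ _ fun i _ => hg i
    _ = r * L := by rw [Nat.card_Icc, nsmul_eq_mul, Nat.add_right_comm, Nat.add_sub_cancel_left]

section GapBlocks

variable {Ω E : Type*} [MeasurableSpace Ω] [MeasurableSpace E] (P : Measure Ω)
  [IsProbabilityMeasure P] {X : ℕ → Ω → E} {f : E → ℝ} {L : ℝ} {r : ℕ}

lemma abs_covariance_gap_blocks_le (hX : ∀ n, Measurable (X n)) (hf : Measurable f)
    (hfL : ∀ n ω, |f (X n ω)| ≤ L) {k : ℕ} {t : Fin k → ℕ}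
    (ht : ∀ i j, i < j → t i + r ≤ t j) {i j : Fin k} (hij : i < j) :
    |cov[fun ω => ∑ x ∈ Finset.Icc (t i + 1) (t i + r), f (X x ω),
        fun ω => ∑ x ∈ Finset.Icc (t j + 1) (t j + r), f (X x ω); P]|
      ≤ 4 * (r * L) * (r * L) * alphaMix P X (j - i) :=
  abs_covariance_le_alphaMix P X hX (n := t i + r)
    (measurable_pastSigma_sum hf fun x hx => (Finset.mem_Icc.mp hx).2)
    (measurable_futureSigma_sum hf fun x hx => by
      obtain ⟨hx₁, hx₂⟩ := Finset.mem_Icc.mp hx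
      have := add_add_sub_le_of_separated ht (by omega) hij
      omega)
    (fun ω => abs_sum_Icc_le (fun n => hfL n ω) _ _)
    (fun ω => abs_sum_Icc_le (fun n => hfL n ω) _ _)

end GapBlocks

theorem variance_gap_blocks_general
    {Ω : Type*} [MeasurableSpace Ω] (P : Measure Ω) [IsProbabilityMeasure P]
    {d : ℕ} (X : ℕ → Ω → EuclideanSpace ℝ (Fin d))
    (hmeas : ∀ n, Measurable (X n))
    (L : ℝ) (hL : ∀ n ω, ‖X n ω‖ ≤ L)
    (p : ℝ) (hp : 2 < p)
    (hsumα : Summable fun m : ℕ => (alphaMix P X (m + 1)) ^ (1 - 2 / p))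
    (u₀ : EuclideanSpace ℝ (Fin d)) (hu₀ : ‖u₀‖ = 1)
    (r : ℕ) :
    ∃ Q₀ : ℝ, 0 < Q₀ ∧
      ∀ (k : ℕ) (M : Fin k → Finset ℕ) (hMne : ∀ j, (M j).Nonempty),
        -- each M_j is a (finite) integer interval
        (∀ j, ∃ a b : ℕ, a ≤ b ∧ M j = Finset.Icc a b) →
        -- the blocks are r-separated
        (∀ i j : Fin k, i < j → ∀ x ∈ M i, ∀ y ∈ M j, x + r ≤ y) →
        -- Var(Y) ≤ Q₀ k, where Y = ∑_j S(D_j) and D_j is the length-r gap block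
        variance (fun ω => ∑ j : Fin k,
            ∑ i ∈ Finset.Icc ((M j).max' (hMne j) + 1) ((M j).max' (hMne j) + r),
              (inner ℝ u₀ (X i ω) : ℝ)) P ≤ Q₀ * k := by
  set c : ℝ := r * L
  set β : ℕ → ℝ := fun m => 4 * c * c * alphaMix P X (m + 1)
  have hβ₀ : ∀ m, 0 ≤ β m := fun m =>
    mul_nonneg (by nlinarith [mul_self_nonneg c]) (alphaMix_nonneg P X _)
  have hβ : Summable β := (summable_alphaMix_of_summable_rpow P X
    (sub_le_self _ (div_nonneg zero_le_two (by linarith))) hsumα).mul_left _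
  have hβsum : 0 ≤ ∑' m, β m := tsum_nonneg hβ₀
  refine ⟨c ^ 2 + 2 * ∑' m, β m + 1, by positivity, fun k M hMne _ hsep => ?_⟩
  set t : Fin k → ℕ := fun j => (M j).max' (hMne j)
  have ht : ∀ i j, i < j → t i + r ≤ t j := fun i j hij =>
    hsep i j hij _ (Finset.max'_mem _ _) _ (Finset.max'_mem _ _)
  have hinner : Measurable fun x : EuclideanSpace ℝ (Fin d) => (inner ℝ u₀ x : ℝ) :=
    measurable_const.inner measurable_id
  have hinnerL : ∀ n ω, |(inner ℝ u₀ (X n ω) : ℝ)| ≤ L := fun n ω =>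
    (abs_real_inner_le_norm _ _).trans (by rw [hu₀, one_mul]; exact hL n ω)
  refine (variance_sum_le_of_abs_covariance_le (β := β)
    (fun j => (Finset.measurable_fun_sum _ fun i _ => hinner.comp (hmeas i)).aemeasurable)
    (fun j ω => abs_sum_Icc_le (fun n => hinnerL n ω) (t j) r) hβ₀ hβ fun i j hij => ?_).trans
    (mul_le_mul_of_nonneg_right (le_add_of_nonneg_right zero_le_one) k.cast_nonneg)
  have hgap := abs_covariance_gap_blocks_le P hmeas hinner hinnerL ht hij
  rwa [show (j : ℕ) - i = j - i - 1 + 1 by have := Fin.lt_def.mp hij; omega] at hgap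

theorem variance_gap_blocks
    {Ω : Type*} [MeasurableSpace Ω] (P : Measure Ω) [IsProbabilityMeasure P]
    {d : ℕ} (X : ℕ → Ω → EuclideanSpace ℝ (Fin d))
    (hmeas : ∀ n, Measurable (X n))
    (hzero : ∀ n, ∫ ω, X n ω ∂P = 0)
    (L : ℝ) (hL : ∀ n ω, ‖X n ω‖ ≤ L)
    (n₀ : ℕ) (hφ : phiMix P X n₀ < 1 / 2)
    (p : ℝ) (hp : 2 < p)
    (hsumα : Summable fun m : ℕ => (alphaMix P X (m + 1)) ^ (1 - 2 / p))
    (u₀ : EuclideanSpace ℝ (Fin d)) (hu₀ : ‖u₀‖ = 1)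
    (r : ℕ) :
    ∃ Q₀ : ℝ, 0 < Q₀ ∧
      ∀ (k : ℕ) (M : Fin k → Finset ℕ) (hMne : ∀ j, (M j).Nonempty),
        -- each M_j is a (finite) integer interval
        (∀ j, ∃ a b : ℕ, a ≤ b ∧ M j = Finset.Icc a b) →
        -- the blocks are r-separated
        (∀ i j : Fin k, i < j → ∀ x ∈ M i, ∀ y ∈ M j, x + r ≤ y) →
        -- Var(Y) ≤ Q₀ k, where Y = ∑_j S(D_j) and D_j is the length-r gap block
        variance (fun ω => ∑ j : Fin k,
            ∑ i ∈ Finset.Icc ((M j).max' (hMne j) + 1) ((M j).max' (hMne j) + r),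
              (inner ℝ u₀ (X i ω) : ℝ)) P ≤ Q₀ * k :=
  variance_gap_blocks_general P X hmeas L hL p hp hsumα u₀ hu₀ r

end
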